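/- Let ρ̄ be a probability measure on ℝ^d and φ ∈ L^∞(ℝ^d × ℝ^d) with ∫∫ ρ̄(dy) ρ̄(dz) φ(y,z) = 0 and ‖φ‖_{L^∞} sufficiently small. Then there exists a finite constant C, independent of N, such that ∫_{ℝ^{dN}} exp( N | ⟨φ, μ_N ⊗ μ_N⟩ |⁴ ) ρ̄^{⊗N}(dx) ≤ C for all N ≥ 2. -/

import Mathlib

/-!
Expanding the exponential, it suffices to show `∫ (N m⁴)ᵏ ≤ θᵏ k!` for `m = ⟨φ, μ_N ⊗ μ_N⟩` and
`θ = max (e¹⁴ ‖φ‖⁴_∞) (8e ‖φ‖⁴_∞) < 1`. For `N < 6k` the trivial bound `|m| ≤ ‖φ‖_∞` suffices.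
For `6k ≤ N`, expand `(∑ᵢⱼ φ(xᵢ, xⱼ))^{4k}` over tuples of `4k` index pairs. If one pair of a tuple
is off the diagonal and shares no index with the other pairs, the corresponding product integrates
to `0`, by independence of the coordinates and `∫∫ φ dρ̄ dρ̄ = 0`. In the remaining tuples every
pair holds at most one index occurring only once, so at most `6k` distinct indices occur, and there
are at most `C(N, 6k) (6k)^{8k}` such tuples. The bound `nⁿ ≤ eⁿ n!` then yields `θᵏ k!`.
-/

open MeasureTheory ProbabilityTheory Finset Real

lemma pow_le_exp_one_pow_mul_factorial (n : ℕ) : (n : ℝ) ^ n ≤ exp 1 ^ n * n.factorial := by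
  have := pow_div_factorial_le_exp (n : ℝ) n.cast_nonneg n
  rwa [div_le_iff₀ (by positivity), ← exp_one_pow] at this

lemma choose_mul_pow_le (k N : ℕ) (hkN : 6 * k ≤ N) :
    (N.choose (6 * k) : ℝ) * ((6 * k : ℕ) : ℝ) ^ (8 * k) * (N : ℝ) ^ k
      ≤ exp 14 ^ k * k.factorial * (N : ℝ) ^ (8 * k) := by
  have hkN' : (k : ℝ) ≤ N := by exact_mod_cast (by omega : k ≤ N)
  have h36 : (36 : ℝ) ≤ exp 1 ^ 7 := by
    have := exp_one_gt_d9
    calc (36 : ℝ) ≤ 2 ^ 7 := by norm_num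
      _ ≤ exp 1 ^ 7 := by gcongr; linarith
  have hchoose : (N.choose (6 * k) : ℝ) ≤ (N : ℝ) ^ (6 * k) / (6 * k).factorial :=
    Nat.choose_le_pow_div _ _
  have h6k := pow_le_exp_one_pow_mul_factorial (6 * k)
  have hk := pow_le_exp_one_pow_mul_factorial k
  have hsplit : ((6 * k : ℕ) : ℝ) ^ (8 * k)
      = ((6 * k : ℕ) : ℝ) ^ (6 * k) * (36 ^ k * k ^ k * k ^ k) := by
    rw [← mul_pow, ← mul_pow, show 8 * k = 6 * k + 2 * k by ring, pow_add, pow_mul _ 2 k,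
      show ((6 * k : ℕ) : ℝ) ^ 2 = 36 * k * k by push_cast; ring]
  calc (N.choose (6 * k) : ℝ) * ((6 * k : ℕ) : ℝ) ^ (8 * k) * (N : ℝ) ^ k
      = (N.choose (6 * k) : ℝ) * ((6 * k : ℕ) : ℝ) ^ (6 * k) * (36 ^ k * (k : ℝ) ^ k * k ^ k)
          * (N : ℝ) ^ k := by rw [hsplit]; ring
    _ ≤ (N : ℝ) ^ (6 * k) / (6 * k).factorial * (exp 1 ^ (6 * k) * (6 * k).factorial)
          * ((exp 1 ^ 7) ^ k * (exp 1 ^ k * k.factorial) * N ^ k) * (N : ℝ) ^ k := by gcongr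
    _ = exp 14 ^ k * k.factorial * (N : ℝ) ^ (8 * k) := by
        rw [show exp 14 = exp 1 ^ 14 by rw [exp_one_pow]; norm_num]
        field_simp
        ring

lemma pow_le_of_le_six_mul {k N : ℕ} (hNk : N ≤ 6 * k) :
    (N : ℝ) ^ k ≤ (exp 1 * 8) ^ k * k.factorial := by
  have hk := pow_le_exp_one_pow_mul_factorial k
  calc (N : ℝ) ^ k ≤ (6 * k) ^ k := by gcongr; exact_mod_cast hNk
    _ = 6 ^ k * (k : ℝ) ^ k := mul_pow _ _ _
    _ ≤ 8 ^ k * (exp 1 ^ k * k.factorial) := by gcongr; norm_num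
    _ = (exp 1 * 8) ^ k * k.factorial := by ring

lemma lintegral_ofReal_exp_le_of_integral_pow_le {X : Type*} [MeasurableSpace X]
    {μ : Measure X} [IsFiniteMeasure μ] {g : X → ℝ} (hg : Measurable g) (hg0 : ∀ x, 0 ≤ g x)
    {c : ℝ} (hgc : ∀ x, g x ≤ c) {θ : ℝ} (hθ0 : 0 ≤ θ) (hθ1 : θ < 1)
    (hmom : ∀ k : ℕ, ∫ x, g x ^ k ∂μ ≤ θ ^ k * k.factorial) :
    ∫⁻ x, ENNReal.ofReal (exp (g x)) ∂μ ≤ ENNReal.ofReal (1 - θ)⁻¹ := by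
  have hexp : ∀ x,
      ENNReal.ofReal (exp (g x)) = ∑' k : ℕ, ENNReal.ofReal (g x ^ k / k.factorial) := fun x => by
      rw [exp_eq_exp_ℝ, NormedSpace.exp_eq_tsum_div, ENNReal.ofReal_tsum_of_nonneg
        (fun k => by have := hg0 x; positivity) (summable_pow_div_factorial _)]
  have hmeas : ∀ k : ℕ, Measurable fun x => g x ^ k / k.factorial := fun k =>
    (hg.pow_const k).div_const _
  have hint : ∀ k : ℕ, Integrable (fun x => g x ^ k / k.factorial) μ := fun k =>
    .of_bound (hmeas k).aestronglyMeasurable (c ^ k / k.factorial) (ae_of_all _ fun x => by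
      rw [norm_of_nonneg (by have := hg0 x; positivity)]
      gcongr
      exacts [hg0 x, hgc x])
  calc ∫⁻ x, ENNReal.ofReal (exp (g x)) ∂μ
      = ∑' k : ℕ, ∫⁻ x, ENNReal.ofReal (g x ^ k / k.factorial) ∂μ := by
        simp_rw [hexp]
        exact lintegral_tsum fun k => (hmeas k).ennreal_ofReal.aemeasurable
    _ = ∑' k : ℕ, ENNReal.ofReal ((∫ x, g x ^ k ∂μ) / k.factorial) := by
        congr with k
        rw [← ofReal_integral_eq_lintegral_ofReal (hint k)
          (ae_of_all _ fun x => by have := hg0 x; positivity), integral_div]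
    _ ≤ ∑' k : ℕ, ENNReal.ofReal (θ ^ k) := ENNReal.tsum_le_tsum fun k =>
        ENNReal.ofReal_le_ofReal (by rw [div_le_iff₀ (by positivity)]; exact hmom k)
    _ = ENNReal.ofReal (1 - θ)⁻¹ := by
        rw [← ENNReal.ofReal_tsum_of_nonneg (fun k => by positivity)
          (summable_geometric_of_lt_one hθ0 hθ1), tsum_geometric_of_lt_one hθ0 hθ1]

namespace PairTuple

variable {ι : Type*} [DecidableEq ι] {p : ℕ} (f : Fin p → ι × ι)

def entry : Fin p ⊕ Fin p → ι := Sum.elim (fun l => (f l).1) (fun l => (f l).2)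

def occ (i : ι) : ℕ := #{s | entry f s = i}

def support : Finset ι := univ.image (entry f)

def IsolatedAt (l : Fin p) : Prop := occ f (f l).1 = 1 ∧ occ f (f l).2 = 1

variable {f}

lemma sum_occ (T : Finset ι) : ∑ i ∈ T, occ f i = #{s | entry f s ∈ T} :=
  sum_card_fiberwise_eq_card_filter _ _ _

lemma entry_ne_of_occ_eq_one {s t : Fin p ⊕ Fin p} (hs : occ f (entry f s) = 1) (hts : t ≠ s) :
    entry f t ≠ entry f s := by
  obtain ⟨u, hu⟩ := card_eq_one.1 hs
  have hs' : s ∈ ({u} : Finset _) := hu ▸ by simp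
  intro h
  have ht' : t ∈ ({u} : Finset _) := hu ▸ by simp [h]
  exact hts ((mem_singleton.1 ht').trans (mem_singleton.1 hs').symm)

lemma two_mul_card_support_le (hf : ∀ l, ¬ IsolatedAt f l) : 2 * #(support f) ≤ 3 * p := by
  set U := {i ∈ support f | occ f i = 1}
  set W := {i ∈ support f | occ f i ≠ 1}
  have hUW : #U + #W = #(support f) := card_filter_add_card_filter_not _
  have hU : #U ≤ p := by
    -- a pair with both entries in `U` would be isolated
    calc #U = ∑ i ∈ U, occ f i := by
          rw [card_eq_sum_ones]; exact sum_congr rfl fun i hi => (mem_filter.1 hi).2.symm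
      _ = #{s | entry f s ∈ U} := sum_occ U
      _ ≤ #(univ : Finset (Fin p)) := by
        refine card_le_card_of_injOn (Sum.elim id id) (fun _ _ => mem_univ _) ?_
        rintro (a | a) ha (b | b) hb hab <;> simp_all [U, IsolatedAt, entry]
      _ = p := by simp
  have hW : #U + 2 * #W ≤ 2 * p := by
    have hocc : ∀ i ∈ support f, 1 ≤ occ f i := fun i hi => by
      obtain ⟨s, -, rfl⟩ := mem_image.1 hi
      exact card_pos.2 ⟨s, by simp⟩
    calc #U + 2 * #W = ∑ i ∈ U, 1 + ∑ i ∈ W, 2 := by simp [mul_comm]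
      _ ≤ ∑ i ∈ U, occ f i + ∑ i ∈ W, occ f i := by
        gcongr with i hi i hi
        · exact hocc i (mem_filter.1 hi).1
        · have := hocc i (mem_filter.1 hi).1
          have := (mem_filter.1 hi).2
          omega
      _ = ∑ i ∈ support f, occ f i := sum_filter_add_sum_filter_not _ _ _
      _ = 2 * p := by rw [sum_occ]; simp [support, two_mul]
  omega

lemma card_filter_card_support_le [Fintype ι] {R : ℕ} (hR : R ≤ Fintype.card ι) :
    #{f : Fin p → ι × ι | #(support f) ≤ R} ≤ (Fintype.card ι).choose R * R ^ (2 * p) := by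
  calc #{f : Fin p → ι × ι | #(support f) ≤ R}
      ≤ #((powersetCard R univ).biUnion fun A => Fintype.piFinset fun _ : Fin p => A ×ˢ A) := by
        refine card_le_card fun f hf => ?_
        obtain ⟨A, hfA, -, hA⟩ := exists_subsuperset_card_eq (subset_univ (support f))
          (mem_filter.1 hf).2 (by simpa using hR)
        refine mem_biUnion.2 ⟨A, mem_powersetCard.2 ⟨subset_univ A, hA⟩, ?_⟩
        simp only [Fintype.mem_piFinset, mem_product]
        exact fun l => ⟨hfA (mem_image_of_mem _ (mem_univ (Sum.inl l))),
          hfA (mem_image_of_mem _ (mem_univ (Sum.inr l)))⟩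
    _ ≤ ∑ A ∈ powersetCard R univ, #(Fintype.piFinset fun _ : Fin p => A ×ˢ A) := card_biUnion_le
    _ = (Fintype.card ι).choose R * R ^ (2 * p) := by
        rw [sum_congr rfl fun A hA => by
          rw [Fintype.card_piFinset_const, card_product, (mem_powersetCard.1 hA).2]]
        simp [pow_mul, sq]

end PairTuple

lemma Measurable.comp_eval_pair {ι E : Type*} [MeasurableSpace E] {φ : E → E → ℝ}
    (hφm : Measurable (Function.uncurry φ)) (i j : ι) :
    Measurable fun x : ι → E => φ (x i) (x j) :=
  hφm.comp (f := fun x : ι → E => (x i, x j)) (by fun_prop)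

section Pairs

variable {E : Type*} [MeasurableSpace E] {ρ : Measure E} [IsProbabilityMeasure ρ] {N : ℕ}
  {φ : E → E → ℝ}

lemma iIndepFun_eval_pi : iIndepFun (fun i (x : Fin N → E) => x i) (Measure.pi fun _ => ρ) :=
  iIndepFun_pi (X := fun _ => id) fun _ => aemeasurable_id

lemma integral_eval_pair {i j : Fin N} (hij : i ≠ j)
    (hφ : Integrable (Function.uncurry φ) (ρ.prod ρ)) :
    ∫ x, φ (x i) (x j) ∂(Measure.pi fun _ => ρ) = ∫ y, ∫ z, φ y z ∂ρ ∂ρ := by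
  have hmap : (Measure.pi fun _ => ρ).map (fun x : Fin N → E => (x i, x j)) = ρ.prod ρ := by
    rw [(indepFun_iff_map_prod_eq_prod_map_map (measurable_pi_apply i).aemeasurable
      (measurable_pi_apply j).aemeasurable).1 (iIndepFun_eval_pi.indepFun hij),
      (measurePreserving_eval _ i).map_eq, (measurePreserving_eval _ j).map_eq]
  have := integral_prod _ hφ
  rw [← hmap, integral_map] at this
  · exact this
  · exact ((measurable_pi_apply i).prodMk (measurable_pi_apply j)).aemeasurable
  · rw [hmap]; exact hφ.aestronglyMeasurable

lemma integral_eval_pair_mul {i j : Fin N} (hij : i ≠ j)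
    (hφm : Measurable (Function.uncurry φ)) (hφ : Integrable (Function.uncurry φ) (ρ.prod ρ))
    {G : (Fin N → E) → ℝ} (hG : Measurable G)
    (hGdep : ∀ x y, (∀ t, t ≠ i → t ≠ j → x t = y t) → G x = G y) :
    ∫ x, φ (x i) (x j) * G x ∂(Measure.pi fun _ => ρ)
      = (∫ y, ∫ z, φ y z ∂ρ ∂ρ) * ∫ x, G x ∂(Measure.pi fun _ => ρ) := by
  classical
  obtain ⟨e⟩ := nonempty_of_isProbabilityMeasure ρ
  set S : Finset (Fin N) := {i, j}
  -- `G` factors through the restriction to `Sᶜ`, which is independent of the restriction to `S`.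
  let extend : ((Sᶜ : Finset (Fin N)) → E) → Fin N → E :=
    fun z t => if h : t ∈ Sᶜ then z ⟨t, h⟩ else e
  have hext : Measurable extend := measurable_pi_iff.2 fun t => by
    by_cases h : t ∈ Sᶜ <;> simp only [extend, h, dite_true, dite_false]
    exacts [measurable_pi_apply _, measurable_const]
  have hφS := hφm.comp_eval_pair (⟨i, by simp [S]⟩ : S) ⟨j, by simp [S]⟩
  have hres : ∀ T : Finset (Fin N), Measurable fun (x : Fin N → E) (t : T) => x t := fun _ =>
    measurable_pi_lambda _ fun _ => measurable_pi_apply _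
  have hind := ((iIndepFun_eval_pi (ρ := ρ)).indepFun_finset S Sᶜ disjoint_compl_right
    (fun t => measurable_pi_apply t)).comp hφS (hG.comp hext)
  have hGext : ∀ x : Fin N → E, G (extend fun t => x t) = G x := fun x =>
    hGdep _ _ fun t hti htj => by simp [extend, S, hti, htj]
  have := hind.integral_fun_mul_eq_mul_integral (hφS.comp (hres S)).aestronglyMeasurable
    ((hG.comp hext).comp (hres Sᶜ)).aestronglyMeasurable
  simp only [Function.comp_apply, hGext] at this
  rw [this, integral_eval_pair hij hφ]

open PairTuple in
lemma integral_prod_eq_zero_of_isolatedAt (hφm : Measurable (Function.uncurry φ))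
    (hφ : Integrable (Function.uncurry φ) (ρ.prod ρ)) (hcanc : ∫ y, ∫ z, φ y z ∂ρ ∂ρ = 0)
    {p : ℕ} {f : Fin p → Fin N × Fin N} {l₀ : Fin p} (hl₀ : IsolatedAt f l₀) :
    ∫ x, ∏ l, φ (x (f l).1) (x (f l).2) ∂(Measure.pi fun _ => ρ) = 0 := by
  have hfst : ∀ s, s ≠ .inl l₀ → entry f s ≠ (f l₀).1 := fun _ hs =>
    entry_ne_of_occ_eq_one (s := .inl l₀) hl₀.1 hs
  have hsnd : ∀ s, s ≠ .inr l₀ → entry f s ≠ (f l₀).2 := fun _ hs =>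
    entry_ne_of_occ_eq_one (s := .inr l₀) hl₀.2 hs
  have hdep : ∀ x y : Fin N → E, (∀ t, t ≠ (f l₀).1 → t ≠ (f l₀).2 → x t = y t) →
      ∏ l ∈ univ.erase l₀, φ (x (f l).1) (x (f l).2)
        = ∏ l ∈ univ.erase l₀, φ (y (f l).1) (y (f l).2) := fun x y hxy =>
    prod_congr rfl fun l hl => by
      have hl : l ≠ l₀ := ne_of_mem_erase hl
      have h11 : (f l).1 ≠ (f l₀).1 := hfst (.inl l) (by simpa)
      have h12 : (f l).1 ≠ (f l₀).2 := hsnd (.inl l) (by simp)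
      have h21 : (f l).2 ≠ (f l₀).1 := hfst (.inr l) (by simp)
      have h22 : (f l).2 ≠ (f l₀).2 := hsnd (.inr l) (by simpa)
      rw [hxy _ h11 h12, hxy _ h21 h22]
  have hij : (f l₀).1 ≠ (f l₀).2 := (hfst (.inr l₀) (by simp)).symm
  have hG : Measurable fun x : Fin N → E => ∏ l ∈ univ.erase l₀, φ (x (f l).1) (x (f l).2) :=
    Finset.measurable_prod _ fun l _ => hφm.comp_eval_pair _ _
  simp_rw [← mul_prod_erase univ _ (mem_univ l₀)]
  rw [integral_eval_pair_mul hij hφm hφ hG hdep, hcanc, zero_mul]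

open PairTuple in
lemma integral_sum_pairs_pow_le (hφm : Measurable (Function.uncurry φ)) {C : ℝ} (hC : 0 ≤ C)
    (hφb : ∀ y z, |φ y z| ≤ C) (hcanc : ∫ y, ∫ z, φ y z ∂ρ ∂ρ = 0) {p R : ℕ}
    (hpR : 3 * p ≤ 2 * R) (hRN : R ≤ N) :
    ∫ x : Fin N → E, (∑ i, ∑ j, φ (x i) (x j)) ^ p ∂(Measure.pi fun _ => ρ)
      ≤ N.choose R * (R : ℝ) ^ (2 * p) * C ^ p := by
  classical
  have hφ : Integrable (Function.uncurry φ) (ρ.prod ρ) :=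
    .of_bound hφm.aestronglyMeasurable C (ae_of_all _ fun z => hφb z.1 z.2)
  have hbound : ∀ (f : Fin p → Fin N × Fin N) (x : Fin N → E),
      |∏ l, φ (x (f l).1) (x (f l).2)| ≤ C ^ p := fun f x => by
    rw [abs_prod]
    exact (prod_le_prod (fun _ _ => abs_nonneg _) fun _ _ => hφb _ _).trans (by simp)
  have hint : ∀ f : Fin p → Fin N × Fin N,
      Integrable (fun x => ∏ l, φ (x (f l).1) (x (f l).2)) (Measure.pi fun _ => ρ) := fun f =>
    .of_bound (Finset.measurable_prod _ fun l _ => hφm.comp_eval_pair _ _).aestronglyMeasurable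
      _ (ae_of_all _ (hbound f))
  calc ∫ x : Fin N → E, (∑ i, ∑ j, φ (x i) (x j)) ^ p ∂(Measure.pi fun _ => ρ)
      = ∑ f : Fin p → Fin N × Fin N,
          ∫ x, ∏ l, φ (x (f l).1) (x (f l).2) ∂(Measure.pi fun _ => ρ) := by
        simp_rw [← Fintype.sum_prod_type', Fintype.sum_pow]
        exact integral_finsetSum _ fun f _ => hint f
    _ ≤ ∑ f : Fin p → Fin N × Fin N, if ∀ l, ¬ IsolatedAt f l then C ^ p else 0 := by
        gcongr with f
        split_ifs with hf
        · exact (integral_mono (hint f) (integrable_const _)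
            fun x => (abs_le.1 (hbound f x)).2).trans (by simp)
        · push Not at hf
          exact (integral_prod_eq_zero_of_isolatedAt hφm hφ hcanc hf.choose_spec).le
    _ = #{f : Fin p → Fin N × Fin N | ∀ l, ¬ IsolatedAt f l} * C ^ p := by
        rw [sum_ite, sum_const_zero, add_zero, sum_const, nsmul_eq_mul]
    _ ≤ #{f : Fin p → Fin N × Fin N | #(support f) ≤ R} * C ^ p := by
        gcongr with f
        intro hf
        have := two_mul_card_support_le hf
        omega
    _ ≤ N.choose R * (R : ℝ) ^ (2 * p) * C ^ p := by
        gcongr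
        exact_mod_cast (Fintype.card_fin N ▸ card_filter_card_support_le (by simpa using hRN))

end Pairs

section Empirical

variable {E : Type*} {N : ℕ} {φ : E → E → ℝ} {C : ℝ}

noncomputable def empiricalPairing (φ : E → E → ℝ) (x : Fin N → E) : ℝ :=
  1 / (N : ℝ) ^ 2 * ∑ i, ∑ j, φ (x i) (x j)

lemma abs_empiricalPairing_le (hC : 0 ≤ C) (hφb : ∀ y z, |φ y z| ≤ C) (x : Fin N → E) :
    |empiricalPairing φ x| ≤ C := by
  rcases N.eq_zero_or_pos with rfl | hN
  · simpa [empiricalPairing] using hC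
  calc |empiricalPairing φ x| ≤ 1 / (N : ℝ) ^ 2 * ∑ i, ∑ j, |φ (x i) (x j)| := by
        rw [empiricalPairing, abs_mul, abs_of_nonneg (by positivity)]
        gcongr
        exact (abs_sum_le_sum_abs _ _).trans (sum_le_sum fun i _ => abs_sum_le_sum_abs _ _)
    _ ≤ 1 / (N : ℝ) ^ 2 * ∑ _i : Fin N, ∑ _j : Fin N, C := by gcongr with i _ j; exact hφb _ _
    _ = C := by
        simp only [sum_const, card_univ, Fintype.card_fin, nsmul_eq_mul]
        field_simp

variable [MeasurableSpace E] {ρ : Measure E} [IsProbabilityMeasure ρ]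

lemma measurable_empiricalPairing (hφm : Measurable (Function.uncurry φ)) :
    Measurable (empiricalPairing (N := N) φ) :=
  (Finset.measurable_sum _ fun i _ => Finset.measurable_sum _ fun j _ =>
    hφm.comp_eval_pair i j).const_mul _

lemma integral_pow_empiricalPairing_le_of_six_mul_le (hφm : Measurable (Function.uncurry φ))
    (hC : 0 ≤ C) (hφb : ∀ y z, |φ y z| ≤ C) (hcanc : ∫ y, ∫ z, φ y z ∂ρ ∂ρ = 0) {k : ℕ}
    (hkN : 6 * k ≤ N) :
    ∫ x, ((N : ℝ) * |empiricalPairing φ x| ^ 4) ^ k ∂(Measure.pi fun _ : Fin N => ρ)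
      ≤ (exp 14 * C ^ 4) ^ k * k.factorial := by
  rcases k.eq_zero_or_pos with rfl | hk
  · simp
  have hN : (0 : ℝ) < N := by exact_mod_cast (by omega : 0 < N)
  have hrw : ∀ x, ((N : ℝ) * |empiricalPairing φ x| ^ 4) ^ k
      = (N : ℝ) ^ k / (N : ℝ) ^ (8 * k) * (∑ i, ∑ j, φ (x i) (x j)) ^ (4 * k) := fun x => by
    rw [(by decide : Even 4).pow_abs, empiricalPairing]
    ring
  calc ∫ x, ((N : ℝ) * |empiricalPairing φ x| ^ 4) ^ k ∂(Measure.pi fun _ : Fin N => ρ)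
      = (N : ℝ) ^ k / (N : ℝ) ^ (8 * k)
          * ∫ x : Fin N → E, (∑ i, ∑ j, φ (x i) (x j)) ^ (4 * k)
              ∂(Measure.pi fun _ : Fin N => ρ) := by
        simp_rw [hrw]
        exact integral_const_mul _ _
    _ ≤ (N : ℝ) ^ k / (N : ℝ) ^ (8 * k)
          * (N.choose (6 * k) * ((6 * k : ℕ) : ℝ) ^ (8 * k) * C ^ (4 * k)) := by
        gcongr
        rw [show 8 * k = 2 * (4 * k) by ring]
        exact integral_sum_pairs_pow_le hφm hC hφb hcanc (by omega) hkN
    _ = N.choose (6 * k) * ((6 * k : ℕ) : ℝ) ^ (8 * k) * (N : ℝ) ^ k / (N : ℝ) ^ (8 * k)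
          * C ^ (4 * k) := by ring
    _ ≤ exp 14 ^ k * k.factorial * (N : ℝ) ^ (8 * k) / (N : ℝ) ^ (8 * k) * C ^ (4 * k) := by
        have := choose_mul_pow_le k N hkN
        gcongr
    _ = (exp 14 * C ^ 4) ^ k * k.factorial := by
        field_simp
        ring

lemma integral_pow_empiricalPairing_le_of_le_six_mul (hC : 0 ≤ C) (hφb : ∀ y z, |φ y z| ≤ C)
    {k : ℕ} (hNk : N ≤ 6 * k) :
    ∫ x, ((N : ℝ) * |empiricalPairing φ x| ^ 4) ^ k ∂(Measure.pi fun _ : Fin N => ρ)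
      ≤ (exp 1 * 8 * C ^ 4) ^ k * k.factorial := by
  calc ∫ x, ((N : ℝ) * |empiricalPairing φ x| ^ 4) ^ k ∂(Measure.pi fun _ : Fin N => ρ)
      ≤ ∫ _x : Fin N → E, ((N : ℝ) * C ^ 4) ^ k ∂(Measure.pi fun _ : Fin N => ρ) :=
        integral_mono_of_nonneg (ae_of_all _ fun x => by positivity) (integrable_const _)
          (ae_of_all _ fun x => by dsimp only; gcongr; exact abs_empiricalPairing_le hC hφb x)
    _ = (N : ℝ) ^ k * (C ^ 4) ^ k := by simp [mul_pow]
    _ ≤ (exp 1 * 8) ^ k * k.factorial * (C ^ 4) ^ k :=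
        mul_le_mul_of_nonneg_right (pow_le_of_le_six_mul hNk) (by positivity)
    _ = (exp 1 * 8 * C ^ 4) ^ k * k.factorial := by ring

lemma integral_pow_empiricalPairing_le (hφm : Measurable (Function.uncurry φ)) (hC : 0 ≤ C)
    (hφb : ∀ y z, |φ y z| ≤ C) (hcanc : ∫ y, ∫ z, φ y z ∂ρ ∂ρ = 0) (k : ℕ) :
    ∫ x, ((N : ℝ) * |empiricalPairing φ x| ^ 4) ^ k ∂(Measure.pi fun _ : Fin N => ρ)
      ≤ max (exp 14 * C ^ 4) (exp 1 * 8 * C ^ 4) ^ k * k.factorial := by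
  rcases le_total (6 * k) N with hkN | hNk
  · exact (integral_pow_empiricalPairing_le_of_six_mul_le hφm hC hφb hcanc hkN).trans
      (by gcongr; exact le_max_left _ _)
  · exact (integral_pow_empiricalPairing_le_of_le_six_mul hC hφb hNk).trans
      (by gcongr; exact le_max_right _ _)

end Empirical

/-- Strengthened exponential law of large numbers (fourth power): for a probability
measure `ρ̄` on `ℝ^d` and bounded `φ` with `∫∫ φ dρ̄ dρ̄ = 0` and `‖φ‖_∞` small enough
(`e¹⁴‖φ‖⁴_∞ < 1` and `8e‖φ‖⁴_∞ < 1`), there is a finite constant `C`, independent of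
`N`, such that `∫ exp(N |⟨φ, μ_N ⊗ μ_N⟩|⁴) dρ̄^{⊗N} ≤ C` for all `N ≥ 2`. -/
theorem stmt3 (d : ℕ) (ρ : Measure (Fin d → ℝ)) [IsProbabilityMeasure ρ]
    (φ : (Fin d → ℝ) → (Fin d → ℝ) → ℝ) (hφm : Measurable (Function.uncurry φ))
    (Cφ : ℝ) (hCφ : 0 ≤ Cφ) (hφb : ∀ x y, |φ x y| ≤ Cφ)
    (hcanc : ∫ y, ∫ z, φ y z ∂ρ ∂ρ = 0)
    (hα : Real.exp 14 * Cφ ^ 4 < 1) (hβ : Real.exp 1 * 8 * Cφ ^ 4 < 1) :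
    ∃ C : ℝ, ∀ N : ℕ, 2 ≤ N →
      ∫⁻ x : Fin N → (Fin d → ℝ),
          ENNReal.ofReal
            (Real.exp ((N : ℝ) *
              |(1 / (N : ℝ) ^ 2) * ∑ i : Fin N, ∑ j : Fin N, φ (x i) (x j)| ^ 4))
        ∂(Measure.pi fun _ : Fin N => ρ)
      ≤ ENNReal.ofReal C := by
  refine ⟨(1 - max (exp 14 * Cφ ^ 4) (exp 1 * 8 * Cφ ^ 4))⁻¹, fun N _ => ?_⟩
  exact lintegral_ofReal_exp_le_of_integral_pow_le
    (((measurable_empiricalPairing hφm).abs.pow_const 4).const_mul _)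
    (fun x => by positivity)
    (c := N * Cφ ^ 4) (fun x => by gcongr; exact abs_empiricalPairing_le hCφ hφb x)
    (le_max_of_le_right (by positivity)) (max_lt hα hβ)
    (integral_pow_empiricalPairing_le hφm hCφ hφb hcanc)
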